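/- For every history H, H satisfies SER if and only if H ⊨ Int and there exist a family of relations WR(x) ⊆ T × T (one per key x) satisfying the read-from conditions of a dependency graph, and a strict total order CO on T with (⋃_x WR(x)) ∪ SO ⊆ CO, such that for every key x and all transactions T₁, T₂, T₃ with T₁ ≠ T₂, (T₁,T₃) ∈ WR(x), T₂ ∈ WriteTx_x, and (T₂,T₃) ∈ CO, it holds that (T₂,T₁) ∈ CO. -/
import Mathlib


namespace DBIso

/-! ### Operations, transactions and histories -/

/-- An operation: a read `R(x,v)` or a write `W(x,v)` on key `x` with value `v`. -/
inductive Op (Key Val : Type) where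
  | read  (k : Key) (v : Val)
  | write (k : Key) (v : Val)

variable {Key Val : Type}

/-- The key accessed by an operation. -/
def Op.key : Op Key Val → Key
  | .read k _ => k
  | .write k _ => k

/-- The value read or written by an operation. -/
def Op.val : Op Key Val → Val
  | .read _ w => w
  | .write _ w => w

/-- A transaction: a finite nonempty set of (identified) operations together with
a strict total order on them (the program order), modelled as a nonempty list of
operations tagged by pairwise distinct operation identifiers; the list order is
the program order `po`. -/
structure Txn (Key Val : Type) where
  ops : List (ℕ × Op Key Val)
  ops_nonempty : ops ≠ []
  ids_nodup : (ops.map Prod.fst).Nodup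

/-- The operation of `T` at position `i` (in program order). -/
def Txn.opAt (T : Txn Key Val) (i : Fin T.ops.length) : Op Key Val :=
  (T.ops.get i).2

/-- `T ⊢ W(x,v)`: `T` writes to key `x` and `v` is the po-last value it writes to `x`. -/
def Txn.FWrites (T : Txn Key Val) (x : Key) (v : Val) : Prop :=
  ∃ i : Fin T.ops.length, T.opAt i = Op.write x v ∧
    ∀ j : Fin T.ops.length, i < j → ∀ w : Val, T.opAt j ≠ Op.write x w

/-- `T ∈ WriteTx_x` : `T` writes to key `x`. -/
def Txn.WritesKey (T : Txn Key Val) (x : Key) : Prop :=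
  ∃ v : Val, T.FWrites x v

/-- `T ⊢ R(x,v)`: `T` reads `x` before writing to it and `v` is the value returned
by the po-first such read (equivalently, the po-first operation of `T` on `x` is a
read returning `v`). -/
def Txn.FReads (T : Txn Key Val) (x : Key) (v : Val) : Prop :=
  ∃ i : Fin T.ops.length, T.opAt i = Op.read x v ∧
    ∀ j : Fin T.ops.length, j < i → (T.opAt j).key ≠ x

/-- Internal consistency of a transaction: every read of a key `x` that is po-preceded
by an operation on `x` returns the value of the po-latest preceding operation on `x`. -/
def Txn.Internal (T : Txn Key Val) : Prop :=
  ∀ i j : Fin T.ops.length, j < i → ∀ (x : Key) (v : Val),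
    T.opAt i = Op.read x v → (T.opAt j).key = x →
    (∀ k : Fin T.ops.length, j < k → k < i → (T.opAt k).key ≠ x) →
    (T.opAt j).val = v

/-- A history: a finite set of transactions with pairwise disjoint operation sets,
together with the session order `SO` (a union of strict total orders on the disjoint
subsets, given by `sess`, partitioning the transactions), and a distinguished initial
transaction `init` (`T_⊥`) writing to every key and `SO`-preceding every other
transaction. -/
structure History (Key Val : Type) where
  txns : Set (Txn Key Val)
  txns_finite : txns.Finite
  SO : Txn Key Val → Txn Key Val → Prop
  sess : Txn Key Val → ℕ
  init : Txn Key Val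
  ops_disjoint : ∀ T ∈ txns, ∀ S ∈ txns, T ≠ S →
      ∀ i ∈ T.ops.map Prod.fst, i ∉ S.ops.map Prod.fst
  so_mem : ∀ T S, SO T S → T ∈ txns ∧ S ∈ txns
  so_irrefl : ∀ T, ¬ SO T T
  so_trans : ∀ T S U, SO T S → SO S U → SO T U
  so_total_sess : ∀ T ∈ txns, ∀ S ∈ txns, T ≠ S → sess T = sess S → SO T S ∨ SO S T
  so_sess : ∀ T S, SO T S → sess T = sess S ∨ T = init
  init_mem : init ∈ txns
  init_writes : ∀ x : Key, ∃ v : Val, init.FWrites x v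
  init_so : ∀ T ∈ txns, T ≠ init → SO init T

/-- `H ⊨ Int`: every transaction of `H` is internally consistent. -/
def History.SatInt (H : History Key Val) : Prop :=
  ∀ T ∈ H.txns, T.Internal

/-- `r` is a strict total order on the set `s`. -/
def IsStrictTotalOrderOn {α : Type*} (s : Set α) (r : α → α → Prop) : Prop :=
  (∀ a b, r a b → a ∈ s ∧ b ∈ s) ∧
  (∀ a, ¬ r a a) ∧
  (∀ a b c, r a b → r b c → r a c) ∧
  (∀ a ∈ s, ∀ b ∈ s, a ≠ b → r a b ∨ r b a)

/-- `H` satisfies SER: `H ⊨ Int` and there is a strict total order `co` on the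
transactions of `H` extending `SO` such that every read `S ⊢ R(x,v)` reads the
value written by the `co`-greatest `co`-predecessor of `S` writing `x`. -/
def History.SatSER (H : History Key Val) : Prop :=
  H.SatInt ∧
  ∃ co : Txn Key Val → Txn Key Val → Prop,
    IsStrictTotalOrderOn H.txns co ∧
    (∀ T S, H.SO T S → co T S) ∧
    ∀ S ∈ H.txns, ∀ (x : Key) (v : Val), S.FReads x v →
      ∃ T', co T' S ∧ T'.WritesKey x ∧
        (∀ T, co T S → T.WritesKey x → T = T' ∨ co T T') ∧
        T'.FWrites x v

/-! ### Dependency graphs -/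

/-- `(WR, WW, RW)` extend the history `H` to a dependency graph. -/
def IsDepGraph (H : History Key Val)
    (WR WW RW : Key → Txn Key Val → Txn Key Val → Prop) : Prop :=
  (∀ (x : Key) (T S : Txn Key Val), WR x T S → T ∈ H.txns ∧ S ∈ H.txns) ∧
  (∀ x : Key, ∀ S ∈ H.txns, (∃ v, S.FReads x v) → ∃! T, WR x T S) ∧
  (∀ (x : Key) (T S : Txn Key Val), WR x T S →
      T ≠ S ∧ ∃ v, T.FWrites x v ∧ S.FReads x v) ∧
  (∀ x : Key, IsStrictTotalOrderOn {T | T ∈ H.txns ∧ T.WritesKey x} (WW x)) ∧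
  (∀ (x : Key) (T S : Txn Key Val),
      RW x T S ↔ T ≠ S ∧ ∃ T', WR x T' T ∧ WW x T' S)

/-- A binary relation is acyclic iff its transitive closure is irreflexive. -/
def RelAcyclic {α : Type*} (r : α → α → Prop) : Prop :=
  ∀ a, ¬ Relation.TransGen r a a

/-- The union `SO ∪ WR ∪ WW ∪ RW` as a binary relation on transactions. -/
def DepUnion (H : History Key Val)
    (WR WW RW : Key → Txn Key Val → Txn Key Val → Prop) :
    Txn Key Val → Txn Key Val → Prop :=
  fun T S => H.SO T S ∨ (∃ x, WR x T S) ∨ (∃ x, WW x T S) ∨ (∃ x, RW x T S)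

/-- The relation `(SO ∪ WR ∪ WW) ; RW?`. -/
def SIRel (H : History Key Val)
    (WR WW RW : Key → Txn Key Val → Txn Key Val → Prop) :
    Txn Key Val → Txn Key Val → Prop :=
  fun T S => ∃ U, (H.SO T U ∨ (∃ x, WR x T U) ∨ (∃ x, WW x T U)) ∧
    (U = S ∨ ∃ x, RW x U S)

/-- `H` satisfies SI: `H ⊨ Int` and there exist `WR, WW, RW` extending `H` to a
dependency graph with `(SO ∪ WR ∪ WW) ; RW?` acyclic. -/
def History.SatSI (H : History Key Val) : Prop :=
  H.SatInt ∧ ∃ WR WW RW, IsDepGraph H WR WW RW ∧ RelAcyclic (SIRel H WR WW RW)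

/-! ### Labeled edges and hyper-polygraphs -/

/-- Dependency edge labels. -/
inductive DepLbl (Key : Type) where
  | SO
  | WR (x : Key)
  | WW (x : Key)
  | RW (x : Key)

/-- A directed labeled edge. -/
structure LEdge (V L : Type) where
  src : V
  dst : V
  lbl : L

variable {V L : Type}

abbrev DepEdge (V Key : Type) := LEdge V (DepLbl Key)
abbrev DepEdgeSet (V Key : Type) := Set (DepEdge V Key)

/-- There is an edge of `E` from `a` to `b`. -/
def EStep (E : Set (LEdge V L)) (a b : V) : Prop := ∃ l, LEdge.mk a b l ∈ E

/-- A set of labeled edges is cyclic iff some vertex has a nonempty edge path to itself. -/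
def EdgeCyclic (E : Set (LEdge V L)) : Prop := ∃ a, Relation.TransGen (EStep E) a a

/-- `a ⤳ b`: there is a (possibly empty) edge path of `E` from `a` to `b`. -/
def EReach (E : Set (LEdge V L)) (a b : V) : Prop := Relation.ReflTransGen (EStep E) a b

/-- A hyper-polygraph over the vertex type `V`: a known edge set `E` together with
the constraint collections `C^WW` and `C^WR`. -/
structure HyperPolygraph (V Key : Type) where
  E : DepEdgeSet V Key
  CWW : Set (DepEdgeSet V Key)
  CWR : Set (DepEdgeSet V Key)

/-- A directed labeled graph (given by its edge set `E'` over the same vertex set)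
is compatible with the hyper-polygraph `G`. -/
def Compatible (G : HyperPolygraph V Key) (E' : DepEdgeSet V Key) : Prop :=
  G.E ⊆ E' ∧
  (∀ (x : Key) (T T' S : V), T ≠ S →
      LEdge.mk T' T (DepLbl.WR x) ∈ E' → LEdge.mk T' S (DepLbl.WW x) ∈ E' →
      LEdge.mk T S (DepLbl.RW x) ∈ E') ∧
  (∀ C ∈ G.CWW ∪ G.CWR, ∃! e, e ∈ E' ∧ e ∈ C)

/-- A hyper-polygraph is SER-acyclic iff some acyclic graph is compatible with it. -/
def SERAcyclic (G : HyperPolygraph V Key) : Prop :=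
  ∃ E', Compatible G E' ∧ ¬ EdgeCyclic E'

/-- The vertex set of the hyper-polygraph of a history: its transactions. -/
abbrev History.Vert (H : History Key Val) : Type := {T : Txn Key Val // T ∈ H.txns}

/-- The hyper-polygraph of a history `H`. -/
def History.hpg (H : History Key Val) : HyperPolygraph H.Vert Key where
  E := {e | (e.lbl = DepLbl.SO ∧ H.SO e.src.1 e.dst.1) ∨
        (∃ (x : Key) (v : Val), e.lbl = DepLbl.WR x ∧
          e.dst.1.FReads x v ∧ e.src.1.FWrites x v ∧ e.src ≠ e.dst ∧
          (∀ T : H.Vert, T.1.FWrites x v → T ≠ e.dst → T = e.src))}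
  CWW := {C | ∃ (x : Key) (T S : H.Vert), T ≠ S ∧
        T.1.WritesKey x ∧ S.1.WritesKey x ∧
        C = {LEdge.mk T S (DepLbl.WW x), LEdge.mk S T (DepLbl.WW x)}}
  CWR := {C | ∃ (x : Key) (S : H.Vert) (v : Val), S.1.FReads x v ∧
        C = {e | ∃ T : H.Vert, T.1.FWrites x v ∧ T ≠ S ∧ e = LEdge.mk T S (DepLbl.WR x)}}

/-- The induced SI graph of a directed labeled graph:
`(E'_SO ∪ E'_WR ∪ E'_WW) ; (E'_RW)?`. -/
def InducedSI (E' : DepEdgeSet V Key) : V → V → Prop :=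
  fun a b => ∃ c : V,
    (LEdge.mk a c DepLbl.SO ∈ E' ∨ (∃ x, LEdge.mk a c (DepLbl.WR x) ∈ E') ∨
      (∃ x, LEdge.mk a c (DepLbl.WW x) ∈ E')) ∧
    (c = b ∨ ∃ x, LEdge.mk c b (DepLbl.RW x) ∈ E')

/-! ### Commit-order hyper-polygraphs -/

/-- Labels for commit-order hyper-polygraphs. -/
inductive COLbl (Key : Type) where
  | SO
  | WR (x : Key)
  | CO

abbrev COEdge (V Key : Type) := LEdge V (COLbl Key)

/-- A commit-order hyper-polygraph. -/
structure COHyperPolygraph (V Key : Type) where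
  E : Set (COEdge V Key)
  CCO : Set (Set (COEdge V Key))
  CWR : Set (Set (COEdge V Key))

/-- The commit-order hyper-polygraph of a history `H`. -/
def History.cohpg (H : History Key Val) : COHyperPolygraph H.Vert Key where
  E := {e | (e.lbl = COLbl.SO ∧ H.SO e.src.1 e.dst.1) ∨
        (∃ (x : Key) (v : Val), e.lbl = COLbl.WR x ∧
          e.dst.1.FReads x v ∧ e.src.1.FWrites x v ∧ e.src ≠ e.dst ∧
          (∀ T : H.Vert, T.1.FWrites x v → T ≠ e.dst → T = e.src))}
  CCO := {C | ∃ T S : H.Vert, T ≠ S ∧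
        C = {LEdge.mk T S COLbl.CO, LEdge.mk S T COLbl.CO}}
  CWR := {C | ∃ (x : Key) (S : H.Vert) (v : Val), S.1.FReads x v ∧
        C = {e | ∃ T : H.Vert, T.1.FWrites x v ∧ T ≠ S ∧ e = LEdge.mk T S (COLbl.WR x)}}

/-- A directed labeled graph (given by its edge set `E'`) is SER-compatible with the
commit-order hyper-polygraph of the history `H`. -/
def SERCompatible (H : History Key Val) (E' : Set (COEdge H.Vert Key)) : Prop :=
  H.cohpg.E ⊆ E' ∧
  (∀ C ∈ H.cohpg.CCO ∪ H.cohpg.CWR, ∃! e, e ∈ E' ∧ e ∈ C) ∧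
  (∀ (x : Key) (T₁ T₂ T₃ : H.Vert), T₁ ≠ T₂ →
      LEdge.mk T₁ T₃ (COLbl.WR x) ∈ E' → T₂.1.WritesKey x →
      LEdge.mk T₂ T₃ COLbl.CO ∈ E' → LEdge.mk T₂ T₁ COLbl.CO ∈ E')

/-- The read-from conditions of a dependency graph on a family `WR`. -/
def ReadFromConds (H : History Key Val)
    (WR : Key → Txn Key Val → Txn Key Val → Prop) : Prop :=
  (∀ (x : Key) (T S : Txn Key Val), WR x T S → T ∈ H.txns ∧ S ∈ H.txns) ∧
  (∀ x : Key, ∀ S ∈ H.txns, (∃ v, S.FReads x v) → ∃! T, WR x T S) ∧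
  (∀ (x : Key) (T S : Txn Key Val), WR x T S →
      T ≠ S ∧ ∃ v, T.FWrites x v ∧ S.FReads x v)

/-! ### The pruning transition system -/

/-- `{(S,T',RW,x) : (T,S,WR,x) ∈ E, S ≠ T'}`: the RW edges derived from the WW edge
`(T,T',WW,x)` and the WR edges of `E`. -/
def DerivedRWofWW (E : DepEdgeSet V Key) (T T' : V) (x : Key) : DepEdgeSet V Key :=
  {e | ∃ S : V, LEdge.mk T S (DepLbl.WR x) ∈ E ∧ S ≠ T' ∧
      e = LEdge.mk S T' (DepLbl.RW x)}

/-- `{(S,T',RW,x) : (T,T',WW,x) ∈ E, S ≠ T'}`: the RW edges derived from the WR edge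
`(T,S,WR,x)` and the WW edges of `E`. -/
def DerivedRWofWR (E : DepEdgeSet V Key) (T S : V) (x : Key) : DepEdgeSet V Key :=
  {e | ∃ T' : V, LEdge.mk T T' (DepLbl.WW x) ∈ E ∧ S ≠ T' ∧
      e = LEdge.mk S T' (DepLbl.RW x)}

/-- States of the pruning transition system: a triple `⟨E, C^WW, C^WR⟩` or the
terminal state `S#` (`bad`). -/
inductive PState (V Key : Type) where
  | node (E : DepEdgeSet V Key) (CWW CWR : Set (DepEdgeSet V Key)) : PState V Key
  | bad : PState V Key

/-- The pruning transition relation `↪`. -/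
inductive PruneStep : PState V Key → PState V Key → Prop where
  | noChoice {E : DepEdgeSet V Key} {CWW CWR : Set (DepEdgeSet V Key)}
      (h : (∅ : DepEdgeSet V Key) ∈ CWW ∪ CWR) :
      PruneStep (.node E CWW CWR) .bad
  | cyc {E : DepEdgeSet V Key} {CWW CWR : Set (DepEdgeSet V Key)}
      (h : EdgeCyclic E) :
      PruneStep (.node E CWW CWR) .bad
  | wwElim {E : DepEdgeSet V Key} {CWW CWR : Set (DepEdgeSet V Key)}
      {cons : DepEdgeSet V Key} {T T' : V} {x : Key}
      (hc : cons ∈ CWW) (he : LEdge.mk T T' (DepLbl.WW x) ∈ cons)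
      (hcyc : EdgeCyclic (E ∪ {LEdge.mk T T' (DepLbl.WW x)} ∪ DerivedRWofWW E T T' x)) :
      PruneStep (.node E CWW CWR)
        (.node E ((CWW \ {cons}) ∪ {cons \ {LEdge.mk T T' (DepLbl.WW x)}}) CWR)
  | wrElim {E : DepEdgeSet V Key} {CWW CWR : Set (DepEdgeSet V Key)}
      {cons : DepEdgeSet V Key} {T S : V} {x : Key}
      (hc : cons ∈ CWR) (he : LEdge.mk T S (DepLbl.WR x) ∈ cons)
      (hcyc : EdgeCyclic (E ∪ {LEdge.mk T S (DepLbl.WR x)} ∪ DerivedRWofWR E T S x)) :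
      PruneStep (.node E CWW CWR)
        (.node E CWW ((CWR \ {cons}) ∪ {cons \ {LEdge.mk T S (DepLbl.WR x)}}))
  | wwIntro {E : DepEdgeSet V Key} {CWW CWR : Set (DepEdgeSet V Key)}
      {T T' : V} {x : Key}
      (hc : ({LEdge.mk T T' (DepLbl.WW x)} : DepEdgeSet V Key) ∈ CWW) :
      PruneStep (.node E CWW CWR)
        (.node (E ∪ {LEdge.mk T T' (DepLbl.WW x)} ∪ DerivedRWofWW E T T' x)
          (CWW \ {{LEdge.mk T T' (DepLbl.WW x)}}) CWR)
  | wrIntro {E : DepEdgeSet V Key} {CWW CWR : Set (DepEdgeSet V Key)}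
      {T S : V} {x : Key}
      (hc : ({LEdge.mk T S (DepLbl.WR x)} : DepEdgeSet V Key) ∈ CWR) :
      PruneStep (.node E CWW CWR)
        (.node (E ∪ {LEdge.mk T S (DepLbl.WR x)} ∪ DerivedRWofWR E T S x)
          CWW (CWR \ {{LEdge.mk T S (DepLbl.WR x)}}))

/-! ### Boolean encoding -/

/-- The edges occurring in some constraint of `G` (i.e. the edges carrying a
Boolean variable, besides the RW variables). -/
def ConsEdges (G : HyperPolygraph V Key) : DepEdgeSet V Key :=
  ⋃₀ (G.CWW ∪ G.CWR)

/-- The truth value, under the assignment `α`, of the literal associated with an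
edge: the constant true if the edge lies in `G.E`, and its variable's value
otherwise. -/
def EdgeVal (G : HyperPolygraph V Key) (α : DepEdge V Key → Prop)
    (e : DepEdge V Key) : Prop :=
  e ∈ G.E ∨ α e

/-- `α` satisfies the Boolean encoding `Φ_G` of the hyper-polygraph `G`. -/
def SatPhi (G : HyperPolygraph V Key) (α : DepEdge V Key → Prop) : Prop :=
  (∀ C ∈ G.CWW ∪ G.CWR, ∃ e ∈ C, α e) ∧
  (∀ C ∈ G.CWW ∪ G.CWR, ∀ e ∈ C, ∀ e' ∈ C, e ≠ e' → ¬(α e ∧ α e')) ∧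
  (∀ (x : Key) (T T' S : V), S ≠ T' →
      (LEdge.mk T T' (DepLbl.WW x) ∈ G.E ∨ LEdge.mk T T' (DepLbl.WW x) ∈ ConsEdges G) →
      (LEdge.mk T S (DepLbl.WR x) ∈ G.E ∨ LEdge.mk T S (DepLbl.WR x) ∈ ConsEdges G) →
      EdgeVal G α (LEdge.mk T T' (DepLbl.WW x)) →
      EdgeVal G α (LEdge.mk T S (DepLbl.WR x)) →
      α (LEdge.mk S T' (DepLbl.RW x)))

/-- The graph induced by the assignment `α`: `G.E` together with all constraint
edges and RW edges whose variables `α` sets to true. -/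
def InducedOf (G : HyperPolygraph V Key) (α : DepEdge V Key → Prop) :
    DepEdgeSet V Key :=
  G.E ∪ {e | e ∈ ConsEdges G ∧ α e} ∪
    {e | (∃ (x : Key) (S T' : V), S ≠ T' ∧ e = LEdge.mk S T' (DepLbl.RW x)) ∧ α e}

/-- `α` satisfies all 2-width-cycle clauses of `G`. -/
def SatPairClauses (G : HyperPolygraph V Key) (α : DepEdge V Key → Prop) : Prop :=
  (∀ e₁ e₂ : DepEdge V Key, e₁ ∈ ConsEdges G → e₂ ∈ ConsEdges G → e₁ ≠ e₂ →
      EReach G.E e₁.dst e₂.src → EReach G.E e₂.dst e₁.src → ¬(α e₁ ∧ α e₂)) ∧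
  (∀ (x : Key) (T T' S : V), T' ≠ T → T' ≠ S → EReach G.E T' S →
      LEdge.mk T T' (DepLbl.WW x) ∈ ConsEdges G →
      LEdge.mk T S (DepLbl.WR x) ∈ ConsEdges G →
      ¬(α (LEdge.mk T T' (DepLbl.WW x)) ∧ α (LEdge.mk T S (DepLbl.WR x))))

theorem freads_val_unique {T : Txn Key Val} {x : Key} {v v' : Val}
    (h : T.FReads x v) (h' : T.FReads x v') : v = v' := by
  obtain ⟨i, hi, hmin⟩ := h
  obtain ⟨i', hi', hmin'⟩ := h'
  rcases lt_trichotomy i i' with hlt | heq | hgt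
  · exact absurd (by rw [hi]; rfl) (hmin' i hlt)
  · subst heq
    rw [hi] at hi'
    injection hi'
  · exact absurd (by rw [hi']; rfl) (hmin i' hgt)

/-- Theorem (SER via commit orders, Biswas–Enea style): `H` satisfies SER iff
`H ⊨ Int` and there exist a family `WR(x)` satisfying the read-from conditions of
a dependency graph, and a strict total order `CO` on the transactions of `H` with
`(⋃_x WR(x)) ∪ SO ⊆ CO`, such that for all `x`, `T₁ ≠ T₂` with `(T₁,T₃) ∈ WR(x)`,
`T₂ ∈ WriteTx_x` and `(T₂,T₃) ∈ CO`, we have `(T₂,T₁) ∈ CO`. -/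
theorem ser_iff_commit_order (Key Val : Type) (H : History Key Val) :
    H.SatSER ↔
      H.SatInt ∧
      ∃ (WR : Key → Txn Key Val → Txn Key Val → Prop)
        (CO : Txn Key Val → Txn Key Val → Prop),
        ReadFromConds H WR ∧
        IsStrictTotalOrderOn H.txns CO ∧
        (∀ (x : Key) (T S : Txn Key Val), WR x T S → CO T S) ∧
        (∀ T S : Txn Key Val, H.SO T S → CO T S) ∧
        (∀ (x : Key) (T₁ T₂ T₃ : Txn Key Val), T₁ ≠ T₂ → WR x T₁ T₃ →
            T₂ ∈ H.txns → T₂.WritesKey x → CO T₂ T₃ → CO T₂ T₁) := by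
  constructor
  · rintro ⟨hInt, co, ⟨hmem, hirr, htr, htot⟩, hso, hread⟩
    refine ⟨hInt, fun x T S => S ∈ H.txns ∧ co T S ∧ T.WritesKey x ∧
      (∃ v, S.FReads x v ∧ T.FWrites x v) ∧
      (∀ T'', co T'' S → T''.WritesKey x → T'' = T ∨ co T'' T),
      co, ⟨?_, ?_, ?_⟩, ⟨hmem, hirr, htr, htot⟩, ?_, hso, ?_⟩
    · rintro x T S ⟨hS, hco, -⟩
      exact ⟨(hmem T S hco).1, hS⟩
    · rintro x S hS ⟨v, hv⟩
      obtain ⟨T', h1, h2, h3, h4⟩ := hread S hS x v hv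
      refine ⟨T', ⟨hS, h1, h2, ⟨v, hv, h4⟩, h3⟩, ?_⟩
      rintro T ⟨-, hco, hw, -, hmax⟩
      rcases h3 T hco hw with h | h
      · exact h
      · rcases hmax T' h1 h2 with h' | h'
        · exact h'.symm
        · exact absurd (htr _ _ _ h h') (hirr T)
    · rintro x T S ⟨hS, hco, hw, ⟨v, hr, hwv⟩, -⟩
      refine ⟨?_, v, hwv, hr⟩
      rintro rfl
      exact hirr T hco
    · rintro x T S ⟨-, hco, -⟩
      exact hco
    · rintro x T₁ T₂ T₃ hne ⟨-, -, -, -, hmax⟩ hT₂ hw hco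
      rcases hmax T₂ hco hw with h | h
      · exact absurd h.symm hne
      · exact h
  · rintro ⟨hInt, WR, CO, ⟨hWRmem, hWRex, hWRv⟩, hSTO, hWRCO, hSOCO, hlast⟩
    refine ⟨hInt, CO, hSTO, hSOCO, ?_⟩
    intro S hS x v hv
    obtain ⟨T, hWR, huniq⟩ := hWRex x S hS ⟨v, hv⟩
    obtain ⟨hne, v', hWv', hRv'⟩ := hWRv x T S hWR
    have hvv : v' = v := freads_val_unique hRv' hv
    subst hvv
    refine ⟨T, hWRCO x T S hWR, ⟨v', hWv'⟩, ?_, hWv'⟩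
    intro T'' hco hw
    by_cases h : T'' = T
    · exact Or.inl h
    · exact Or.inr (hlast x T T'' S (fun e => h e.symm) hWR
        ((hSTO.1 _ _ hco).1) hw hco)

end DBIso
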